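/- Let d be a positive integer, let d < q ≤ ∞, and let p = q/(q−d) (with p = 1 when q = ∞). Let a = (a_j)_{j=1}^∞ ∈ ℓ^p and let M > 0. Then the function f_d defined on X_{q,M} = {x ∈ ℓ^q : ‖x‖_q ≤ M} by f_d(x) = ∑_{j=1}^∞ a_j x_j^d is continuous with respect to the product topology on X_{q,M} as a subspace of Ω. -/

import Mathlib

/-!
The partial sums `∑_{j<n} a_j x_j^d` depend on finitely many coordinates, so they are continuous
for the product topology; it suffices that they converge uniformly on `X_{q,M}`. By Hölder's
inequality for the conjugate pair `(p, q/d)`, the tail from index `n` is bounded on `X_{q,M}` by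
`‖(a_j)_{j≥n}‖_p · M^d`, which tends to `0` because `a ∈ ℓ^p`.
-/

open scoped ENNReal

/-- The exponent `p = q/(q-d)`, interpreted as `1` when `q = ∞`. -/
noncomputable def holderExponent (q : ℝ≥0∞) (d : ℕ) : ℝ≥0∞ :=
  if q = ∞ then 1 else q / (q - d)

/-- `X_{q,M} = {x ∈ ℓ^q : ‖x‖_q ≤ M}`, regarded as a set of sequences in the product
space `ℕ → 𝕜` (with the product topology, i.e. as a subspace of the product `Ω` of
closed balls of radius `M`). -/
def lpBall (𝕜 : Type*) [RCLike 𝕜] (q : ℝ≥0∞) (M : ℝ) : Set (ℕ → 𝕜) :=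
  {x | ∃ y : lp (fun _ : ℕ => 𝕜) q, ‖y‖ ≤ M ∧ ⇑y = x}

open Filter Topology

theorem tendstoUniformlyOn_sum_range_of_tsum_tail_le {α E : Type*} [NormedAddCommGroup E]
    [CompleteSpace E] {f : ℕ → α → E} {s : Set α} {t : ℕ → ℝ}
    (hf : ∀ x ∈ s, Summable fun j => ‖f j x‖) (ht : Tendsto t atTop (𝓝 0))
    (htail : ∀ n, ∀ x ∈ s, ∑' k, ‖f (k + n) x‖ ≤ t n) :
    TendstoUniformlyOn (fun n x => ∑ j ∈ Finset.range n, f j x) (fun x => ∑' j, f j x)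
      atTop s := by
  rw [Metric.tendstoUniformlyOn_iff]
  intro ε hε
  filter_upwards [ht.eventually (gt_mem_nhds hε)] with n hn x hx
  calc dist (∑' j, f j x) (∑ j ∈ Finset.range n, f j x)
      = ‖∑' k, f (k + n) x‖ := by
        rw [dist_eq_norm, ← (hf x hx).of_norm.sum_add_tsum_nat_add n, add_sub_cancel_left]
    _ ≤ ∑' k, ‖f (k + n) x‖ :=
        norm_tsum_le_tsum_norm ((summable_nat_add_iff n).mpr (hf x hx))
    _ ≤ t n := htail n x hx
    _ < ε := hn

theorem continuousOn_tsum_of_tsum_tail_le {α E : Type*} [TopologicalSpace α]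
    [NormedAddCommGroup E] [CompleteSpace E] {f : ℕ → α → E} {s : Set α} {t : ℕ → ℝ}
    (hcont : ∀ j, ContinuousOn (f j) s) (hf : ∀ x ∈ s, Summable fun j => ‖f j x‖)
    (ht : Tendsto t atTop (𝓝 0)) (htail : ∀ n, ∀ x ∈ s, ∑' k, ‖f (k + n) x‖ ≤ t n) :
    ContinuousOn (fun x => ∑' j, f j x) s :=
  (tendstoUniformlyOn_sum_range_of_tsum_tail_le hf ht htail).continuousOn
    (Eventually.of_forall fun _ => continuousOn_finsetSum _ fun j _ => hcont j).frequently

theorem Real.summable_and_tsum_mul_pow_le {ι : Type*} {p q M : ℝ} {d : ℕ}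
    (hpq : p.HolderConjugate (q / d)) {b c : ι → ℝ} (hb : ∀ i, 0 ≤ b i) (hc : ∀ i, 0 ≤ c i)
    (hbp : Summable fun i => b i ^ p) (hcq : Summable fun i => c i ^ q) (hM : 0 ≤ M)
    (hcM : ∑' i, c i ^ q ≤ M ^ q) :
    (Summable fun i => b i * c i ^ d) ∧
      ∑' i, b i * c i ^ d ≤ (∑' i, b i ^ p) ^ (1 / p) * M ^ d := by
  -- `q / 0 = 0` is not a Hölder exponent
  have hd : (0 : ℝ) < d := by
    refine (Nat.cast_nonneg d).lt_of_ne fun hd => ?_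
    have h := hpq.symm.lt
    rw [← hd, div_zero] at h
    linarith
  have hq : 0 < q := (div_pos_iff_of_pos_right hd).mp hpq.symm.pos
  have hpow : ∀ i, (c i ^ d) ^ (q / d) = c i ^ q := fun i => by
    rw [← Real.rpow_natCast, ← Real.rpow_mul (hc i), mul_div_cancel₀ _ hd.ne']
  obtain ⟨hsum, hle⟩ := summable_and_inner_le_Lp_mul_Lq_tsum_of_nonneg hpq hb
    (fun i => pow_nonneg (hc i) d) hbp (by simpa only [hpow] using hcq)
  refine ⟨hsum, hle.trans (mul_le_mul_of_nonneg_left ?_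
    (Real.rpow_nonneg (tsum_nonneg fun i => Real.rpow_nonneg (hb i) p) _))⟩
  calc (∑' i, (c i ^ d) ^ (q / d)) ^ (1 / (q / d))
      ≤ (M ^ q) ^ (1 / (q / d)) := by
        simp only [hpow]
        gcongr
        exact tsum_nonneg fun i => Real.rpow_nonneg (hc i) q
    _ = M ^ d := by
        rw [← Real.rpow_mul hM, one_div_div, mul_div_cancel₀ _ hq.ne', Real.rpow_natCast]

theorem holderExponent_top (d : ℕ) : holderExponent ∞ d = 1 := if_pos rfl

theorem holderConjugate_holderExponent_toReal {d : ℕ} (hd : 0 < d) {q : ℝ≥0∞}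
    (hq : (d : ℝ≥0∞) < q) (hq_top : q ≠ ∞) :
    (holderExponent q d).toReal.HolderConjugate (q.toReal / d) := by
  have hdq : (d : ℝ) < q.toReal := by
    simpa using (ENNReal.toReal_lt_toReal (by simp) hq_top).mpr hq
  have hd' : (0 : ℝ) < d := by exact_mod_cast hd
  rw [holderExponent, if_neg hq_top, ENNReal.toReal_div, ENNReal.toReal_sub_of_le hq.le hq_top,
    ENNReal.toReal_natCast, Real.holderConjugate_iff]
  refine ⟨(one_lt_div (by linarith)).mpr (by linarith), ?_⟩
  have hq0 : q.toReal ≠ 0 := by linarith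
  field_simp
  ring

theorem holderExponent_toReal_pos {d : ℕ} (hd : 0 < d) {q : ℝ≥0∞} (hq : (d : ℝ≥0∞) < q) :
    0 < (holderExponent q d).toReal := by
  rcases eq_or_ne q ∞ with rfl | hq_top
  · simp [holderExponent_top]
  · exact (holderConjugate_holderExponent_toReal hd hq hq_top).pos

section lpBall

variable {𝕜 : Type*} [RCLike 𝕜] {q : ℝ≥0∞} {M : ℝ} {x : ℕ → 𝕜}

theorem nonneg_of_mem_lpBall (hx : x ∈ lpBall 𝕜 q M) : 0 ≤ M := by
  obtain ⟨y, hy, -⟩ := hx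
  exact (lp.norm_nonneg' y).trans hy

theorem norm_apply_le_of_mem_lpBall_top (hx : x ∈ lpBall 𝕜 ∞ M) (j : ℕ) : ‖x j‖ ≤ M := by
  obtain ⟨y, hy, rfl⟩ := hx
  exact (lp.norm_apply_le_norm ENNReal.top_ne_zero y j).trans hy

theorem summable_and_tsum_rpow_le_of_mem_lpBall (hq : 0 < q.toReal) (hx : x ∈ lpBall 𝕜 q M) :
    (Summable fun j => ‖x j‖ ^ q.toReal) ∧ ∑' j, ‖x j‖ ^ q.toReal ≤ M ^ q.toReal := by
  obtain ⟨y, hy, rfl⟩ := hx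
  refine ⟨(lp.memℓp y).summable hq, ?_⟩
  rw [← lp.norm_rpow_eq_tsum hq]
  exact Real.rpow_le_rpow (lp.norm_nonneg' y) hy hq.le

theorem summable_and_tsum_tail_le_of_mem_lpBall {d : ℕ} (hd : 0 < d) (hq : (d : ℝ≥0∞) < q)
    {a : ℕ → 𝕜} (ha : Memℓp a (holderExponent q d)) (hx : x ∈ lpBall 𝕜 q M) (n : ℕ) :
    (Summable fun k => ‖a (k + n) * x (k + n) ^ d‖) ∧
      ∑' k, ‖a (k + n) * x (k + n) ^ d‖ ≤
        (∑' k, ‖a (k + n)‖ ^ (holderExponent q d).toReal) ^ (1 / (holderExponent q d).toReal) *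
          M ^ d := by
  simp only [norm_mul, norm_pow]
  rcases eq_or_ne q ∞ with rfl | hq_top
  · rw [holderExponent_top] at ha ⊢
    simp only [ENNReal.toReal_one, Real.rpow_one, div_one]
    have ha1 : Summable fun k => ‖a (k + n)‖ :=
      (summable_nat_add_iff (f := fun k => ‖a k‖) n).mpr (by simpa using ha.summable (by simp))
    have hle : ∀ k, ‖a (k + n)‖ * ‖x (k + n)‖ ^ d ≤ ‖a (k + n)‖ * M ^ d := fun k => by
      gcongr
      exact norm_apply_le_of_mem_lpBall_top hx _
    have hsum := Summable.of_nonneg_of_le (fun k => by positivity) hle (ha1.mul_right _)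
    exact ⟨hsum, (hsum.tsum_le_tsum hle (ha1.mul_right _)).trans_eq tsum_mul_right⟩
  · have hpq := holderConjugate_holderExponent_toReal hd hq hq_top
    obtain ⟨hxs, hxM⟩ := summable_and_tsum_rpow_le_of_mem_lpBall
      (ENNReal.toReal_pos (ne_bot_of_gt hq) hq_top) hx
    refine Real.summable_and_tsum_mul_pow_le hpq (fun _ => norm_nonneg _) (fun _ => norm_nonneg _)
      ((summable_nat_add_iff (f := fun k => ‖a k‖ ^ _) n).mpr (ha.summable hpq.pos))
      ((summable_nat_add_iff (f := fun k => ‖x k‖ ^ _) n).mpr hxs)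
      (nonneg_of_mem_lpBall hx) ?_
    exact (tsum_comp_le_tsum_of_inj hxs (fun _ => by positivity) (add_left_injective n)).trans hxM

end lpBall

theorem continuousOn_lpBall_sum_pow_general {𝕜 : Type*} [RCLike 𝕜]
    (d : ℕ) (hd : 0 < d) (q : ℝ≥0∞) (hq : (d : ℝ≥0∞) < q)
    (a : ℕ → 𝕜) (ha : Memℓp a (holderExponent q d))
    (M : ℝ) :
    ContinuousOn (fun x : ℕ → 𝕜 => ∑' j : ℕ, a j * x j ^ d) (lpBall 𝕜 q M) := by
  have htail := fun x (hx : x ∈ lpBall 𝕜 q M) n =>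
    summable_and_tsum_tail_le_of_mem_lpBall hd hq ha hx n
  refine continuousOn_tsum_of_tsum_tail_le (fun j => ?_)
    (fun x hx => by simpa using (htail x hx 0).1) ?_ fun n x hx => (htail x hx n).2
  · exact (continuous_const.mul ((continuous_apply j).pow d)).continuousOn
  · have hp := one_div_pos.mpr (holderExponent_toReal_pos hd hq)
    simpa only [Real.zero_rpow hp.ne', zero_mul] using
      ((tendsto_sum_nat_add fun j => ‖a j‖ ^ (holderExponent q d).toReal).rpow_const
        (Or.inr hp.le)).mul_const (M ^ d)

/-- Let `d ≥ 1`, `d < q ≤ ∞`, `p = q/(q-d)` (with `p = 1` when `q = ∞`) and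
`a ∈ ℓ^p`.  For `M > 0`, the function `f_d(x) = ∑' j, a j * x j ^ d` is continuous on
`X_{q,M}` with respect to the product topology on `X_{q,M}` as a subspace of `Ω`. -/
theorem continuousOn_lpBall_sum_pow {𝕜 : Type*} [RCLike 𝕜]
    (d : ℕ) (hd : 0 < d) (q : ℝ≥0∞) (hq : (d : ℝ≥0∞) < q)
    (a : ℕ → 𝕜) (ha : Memℓp a (holderExponent q d))
    (M : ℝ) (hM : 0 < M) :
    ContinuousOn (fun x : ℕ → 𝕜 => ∑' j : ℕ, a j * x j ^ d) (lpBall 𝕜 q M) :=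
  continuousOn_lpBall_sum_pow_general d hd q hq a ha M
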